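/- Let p be an odd prime and let G be a finite p-group such that Aut(G) is elementary abelian (abelian with φ^p = id for every automorphism φ). Then the Frattini subgroup Φ(G) is elementary abelian (abelian with x^p = 1 for all its elements x), and moreover Z(G) = Φ(G) or [G,G] = Φ(G). -/

import Mathlib

/-!
For `θ : G →* Z(G)` with `θ (θ x) = θ x ^ t` and `p ∤ 1 + t`, the map `x ↦ x * θ x` is an
automorphism whose `p`-th power is `x ↦ x * θ x ^ s` with `s = ∑_{i < p} (1 + t) ^ i`; for `p` odd,
`p ^ 2 ∤ s`, so if `Aut(G)` has exponent `p` then `θ x ^ p = 1`.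

If `Aut(G)` is abelian of exponent `p`, so is `Inn(G)`: commutators and `p`-th powers are central.
Then `x ↦ x ^ p` is such a `θ`, so `G` has exponent `p ^ 2`, and `Φ(G) = G' G^p` consists of
central elements of order dividing `p`. If `G' ≠ Φ(G)`, some `ν : G → ℤ/p²` does not vanish on a
`p`-th power, and `θ = z ^ ν` shows that no central `z` has order `p ^ 2`. Finally a central `z`
of order `p` outside `Φ(G)` gives `φ, ψ : G → ℤ/p` with `φ z ≠ 0 = ψ z` and `ψ ≠ 0`; the
automorphisms `x ↦ x ⁅a, b⁆ ^ φ x` and `x ↦ x z ^ ψ x` commute only if `⁅a, b⁆ = 1`, whereas an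
abelian `G` is trivial because inversion is an automorphism of order `2`.
-/

open Subgroup
open scoped commutatorElement IsMulCommutative

theorem Nat.not_sq_dvd_geom_sum {p x : ℕ} (hp : p.Prime) (hodd : Odd p) (hx : ¬ p ∣ x) :
    ¬ p ^ 2 ∣ ∑ i ∈ Finset.range p, x ^ i := by
  intro h
  by_cases hx1 : (p : ℤ) ∣ (x : ℤ) - 1
  · have hmul := emultiplicity_geom_sum₂_eq_one (R := ℤ) (y := 1) (Nat.prime_iff_prime_int.mp hp)
      hodd hx1 (by exact_mod_cast hx)
    have h2 : (p : ℤ) ^ 2 ∣ ∑ i ∈ Finset.range p, (x : ℤ) ^ i * 1 ^ (p - 1 - i) := by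
      simpa using Int.natCast_dvd_natCast.mpr h
    have := pow_dvd_iff_le_emultiplicity.mp h2
    rw [hmul] at this
    norm_num at this
  · have := Fact.mk hp
    have hx1' : (x : ZMod p) - 1 ≠ 0 := by
      rw [sub_ne_zero]
      intro h'
      apply hx1
      rw [← ZMod.intCast_zmod_eq_zero_iff_dvd]
      push_cast [h']
      ring
    have hone : ∑ i ∈ Finset.range p, (x : ZMod p) ^ i = 1 := by
      refine mul_right_cancel₀ hx1' ?_
      rw [geom_sum_mul, ZMod.pow_card, one_mul]
    have hzero : ((∑ i ∈ Finset.range p, x ^ i : ℕ) : ZMod p) = 0 :=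
      (ZMod.natCast_eq_zero_iff _ _).mpr ((dvd_pow_self p two_ne_zero).trans h)
    push_cast at hzero
    exact one_ne_zero (hone ▸ hzero)

theorem IsPGroup.pow_prime_pow_eq_one_of_pow_eq_one {p : ℕ} [Fact p.Prime] {G : Type*}
    [Group G] (hG : IsPGroup p G) {g : G} {n k : ℕ} (hg : g ^ n = 1) (hn : ¬ p ^ (k + 1) ∣ n) :
    g ^ p ^ k = 1 := by
  obtain ⟨j, hj⟩ := IsPGroup.iff_orderOf.mp hG g
  rw [← orderOf_dvd_iff_pow_eq_one, hj]
  apply pow_dvd_pow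
  by_contra! hkj
  exact hn ((pow_dvd_pow p hkj).trans (hj ▸ orderOf_dvd_of_pow_eq_one hg))

theorem IsPGroup.eq_one_of_pow_eq_one {p : ℕ} {G : Type*} [Group G] (hG : IsPGroup p G) {g : G}
    {n : ℕ} (hn : p.Coprime n) (hg : g ^ n = 1) : g = 1 :=
  orderOf_eq_one_iff.mp ((hG.orderOf_coprime hn g).eq_one_of_dvd (orderOf_dvd_of_pow_eq_one hg))

theorem CommGroup.exists_zmod_apply_ne_one {A : Type*} [CommGroup A] [Finite A] {n : ℕ}
    [NeZero n] (hA : ∀ a : A, a ^ n = 1) {a : A} (ha : a ≠ 1) :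
    ∃ φ : A →* Multiplicative (ZMod n), φ a ≠ 1 := by
  have : HasEnoughRootsOfUnity (Multiplicative (ZMod n)) n :=
    { prim := ⟨.ofAdd 1, by
        simpa [orderOf_ofAdd_eq_addOrderOf] using
          IsPrimitiveRoot.orderOf (Multiplicative.ofAdd (1 : ZMod n))⟩
      cyc :=
        have : IsCyclic (Multiplicative (ZMod n))ˣ := isCyclic_of_surjective _ toUnits.surjective
        inferInstance }
  have := HasEnoughRootsOfUnity.of_dvd (Multiplicative (ZMod n))
    (Monoid.exponent_dvd_of_forall_pow_eq_one hA)
  obtain ⟨φ, hφ⟩ :=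
    CommGroup.exists_apply_ne_one_of_hasEnoughRootsOfUnity A (Multiplicative (ZMod n)) ha
  exact ⟨toUnits.symm.toMonoidHom.comp φ, by simpa using hφ⟩

def zmodPowHom {M : Type*} [Monoid M] {n : ℕ} [NeZero n] (z : M) (hz : z ^ n = 1) :
    Multiplicative (ZMod n) →* M where
  toFun k := z ^ k.toAdd.val
  map_one' := by simp
  map_mul' a b := by rw [toAdd_mul, ZMod.val_add, ← pow_add, ← pow_eq_pow_mod _ hz]

@[simp]
theorem zmodPowHom_apply {M : Type*} [Monoid M] {n : ℕ} [NeZero n] {z : M} (hz : z ^ n = 1)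
    (k : Multiplicative (ZMod n)) : zmodPowHom z hz k = z ^ k.toAdd.val := rfl

theorem zmodPowHom_eq_one_iff {M : Type*} [Monoid M] {n : ℕ} [NeZero n] {z : M} (hz : z ^ n = 1)
    (hord : orderOf z = n) {k : Multiplicative (ZMod n)} : zmodPowHom z hz k = 1 ↔ k = 1 := by
  rw [zmodPowHom_apply, ← orderOf_dvd_iff_pow_eq_one, hord, ← ZMod.natCast_eq_zero_iff,
    ZMod.natCast_zmod_val, toAdd_eq_zero]

section

variable {G : Type*} [Group G]

theorem exists_zmod_hom_le_ker_apply_ne_one [Finite G] {n : ℕ} [NeZero n] {N : Subgroup G}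
    [N.Normal] (hN : commutator G ≤ N) (hpow : ∀ g : G, g ^ n ∈ N) {x : G} (hx : x ∉ N) :
    ∃ φ : G →* Multiplicative (ZMod n), N ≤ φ.ker ∧ φ x ≠ 1 := by
  have := Normal.quotient_commutative_iff_commutator_le.mpr hN
  obtain ⟨φ, hφ⟩ := CommGroup.exists_zmod_apply_ne_one (A := G ⧸ N) (n := n)
    (QuotientGroup.induction_on · fun g ↦ by
      rw [← QuotientGroup.mk_pow, QuotientGroup.eq_one_iff]; exact hpow g)
    (a := (x : G ⧸ N)) (by rwa [Ne, QuotientGroup.eq_one_iff])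
  refine ⟨φ.comp (QuotientGroup.mk' N), fun y hy ↦ ?_, hφ⟩
  simp [(QuotientGroup.eq_one_iff y).mpr hy]

theorem frattini_le_ker {p : ℕ} [Fact p.Prime] (φ : G →* Multiplicative (ZMod p)) :
    frattini G ≤ φ.ker := by
  have : IsSimpleGroup (Multiplicative (ZMod p)) := isSimpleGroup_of_prime_card (p := p) (by simp)
  rcases eq_bot_or_eq_top φ.range with h | h
  · rw [MonoidHom.range_eq_bot_iff.mp h, MonoidHom.ker_one]
    exact le_top
  · rw [← MonoidHom.comap_bot]
    exact frattini_le_coatom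
      (isCoatom_comap_of_surjective (MonoidHom.range_eq_top.mp h) isCoatom_bot)

theorem frattini_le_of_commutator_le [Finite G] {p : ℕ} [Fact p.Prime] {N : Subgroup G}
    [N.Normal] (hN : commutator G ≤ N) (hpow : ∀ g : G, g ^ p ∈ N) : frattini G ≤ N := by
  intro x hx
  by_contra hxN
  obtain ⟨φ, -, hφx⟩ := exists_zmod_hom_le_ker_apply_ne_one hN hpow hxN
  exact hφx (frattini_le_ker φ hx)

theorem IsPGroup.normal_of_isCoatom [Finite G] {p : ℕ} [Fact p.Prime] (hG : IsPGroup p G)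
    {M : Subgroup G} (hM : IsCoatom M) : M.Normal :=
  have := hG.isNilpotent
  NormalizerCondition.normal_of_coatom M Group.normalizerCondition_of_isNilpotent hM

theorem IsPGroup.index_eq_of_isCoatom [Finite G] {p : ℕ} [Fact p.Prime] (hG : IsPGroup p G)
    {M : Subgroup G} (hM : IsCoatom M) : M.index = p := by
  have := hG.normal_of_isCoatom hM
  have : Nontrivial (G ⧸ M) := QuotientGroup.nontrivial_iff.mpr hM.1
  obtain ⟨y, hy⟩ := exists_prime_orderOf_dvd_card' (G := G ⧸ M) p
    ((hG.to_quotient M).card_eq_or_dvd.resolve_left Finite.one_lt_card.ne')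
  obtain ⟨g, rfl⟩ := QuotientGroup.mk'_surjective M y
  have hgM : g ∉ M := fun hg ↦ by
    rw [QuotientGroup.mk'_apply, (QuotientGroup.eq_one_iff g).mpr hg, orderOf_one] at hy
    exact (Fact.out : p.Prime).one_lt.ne hy
  have hM_lt : M < (zpowers (QuotientGroup.mk' M g)).comap (QuotientGroup.mk' M) :=
    SetLike.lt_iff_le_and_exists.mpr ⟨QuotientGroup.le_comap_mk' M _, g, mem_zpowers _, hgM⟩
  have hy_top : zpowers (QuotientGroup.mk' M g) = ⊤ := by
    rw [← map_comap_eq_self_of_surjective (QuotientGroup.mk'_surjective M) (zpowers _),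
      hM.2 _ hM_lt, ← MonoidHom.range_eq_map, MonoidHom.range_eq_top]
    exact QuotientGroup.mk'_surjective M
  rw [Subgroup.index, ← card_top, ← hy_top, Nat.card_zpowers, hy]

theorem IsPGroup.commutator_le_frattini [Finite G] {p : ℕ} [Fact p.Prime] (hG : IsPGroup p G) :
    commutator G ≤ frattini G :=
  le_iInf₂ fun M hM ↦
    have := hG.normal_of_isCoatom hM
    have : IsCyclic (G ⧸ M) := isCyclic_of_prime_card (hG.index_eq_of_isCoatom hM)
    Normal.quotient_commutative_iff_commutator_le.mp inferInstance

theorem IsPGroup.pow_mem_frattini [Finite G] {p : ℕ} [Fact p.Prime] (hG : IsPGroup p G) (g : G) :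
    g ^ p ∈ frattini G := by
  simp only [frattini, Order.radical, mem_iInf]
  intro M hM
  have := hG.normal_of_isCoatom hM
  exact hG.index_eq_of_isCoatom hM ▸ M.pow_index_mem g

section CentralCommutators

variable (hcz : ∀ a b : G, ⁅a, b⁆ ∈ center G)
include hcz

theorem commutatorElement_mul_left_of_forall_mem_center (a b c : G) :
    ⁅a * b, c⁆ = ⁅a, c⁆ * ⁅b, c⁆ := by
  calc ⁅a * b, c⁆ = a * ⁅b, c⁆ * a⁻¹ * ⁅a, c⁆ := by simp only [commutatorElement_def]; group
    _ = ⁅b, c⁆ * ⁅a, c⁆ := by rw [mem_center_iff.mp (hcz b c) a, mul_inv_cancel_right]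
    _ = ⁅a, c⁆ * ⁅b, c⁆ := (mem_center_iff.mp (hcz b c) _).symm

theorem commutatorElement_pow_left_of_forall_mem_center (a b : G) (n : ℕ) :
    ⁅a ^ n, b⁆ = ⁅a, b⁆ ^ n := by
  induction n with
  | zero => simp
  | succ n ih => rw [pow_succ, commutatorElement_mul_left_of_forall_mem_center hcz, ih, pow_succ]

theorem mul_pow_of_forall_mem_center (x y : G) (n : ℕ) :
    (x * y) ^ n = x ^ n * y ^ n * ⁅y, x⁆ ^ n.choose 2 := by
  induction n with
  | zero => simp
  | succ n ih =>
    have hc (k : ℕ) (g : G) : g * ⁅y, x⁆ ^ k = ⁅y, x⁆ ^ k * g :=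
      mem_center_iff.mp (pow_mem (hcz y x) k) g
    have hswap : y ^ n * x = ⁅y, x⁆ ^ n * x * y ^ n := by
      rw [← commutatorElement_pow_left_of_forall_mem_center hcz, commutatorElement_def]; group
    calc (x * y) ^ (n + 1) = x ^ n * (y ^ n * x) * y * ⁅y, x⁆ ^ n.choose 2 := by
          rw [pow_succ, ih, mul_assoc _ _ (x * y), ← hc]; simp only [mul_assoc]
      _ = x ^ (n + 1) * y ^ (n + 1) * ⁅y, x⁆ ^ (n + 1).choose 2 := by
          rw [hswap, Nat.choose_succ_succ' n 1, Nat.choose_one_right, pow_add ⁅y, x⁆, pow_succ x,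
            pow_succ y]
          simp only [mul_assoc]
          rw [← hc n]
          simp only [mul_assoc]
          rw [hc n]

theorem commutatorElement_pow_eq_one_of_pow_mem_center {n : ℕ}
    (hpz : ∀ g : G, g ^ n ∈ center G) (a b : G) : ⁅a, b⁆ ^ n = 1 := by
  rw [← commutatorElement_pow_left_of_forall_mem_center hcz,
    commutatorElement_eq_one_iff_mul_comm, mem_center_iff.mp (hpz a) b]

def powCenterHom {p : ℕ} (hodd : Odd p) (hpz : ∀ g : G, g ^ p ∈ center G) : G →* center G where
  toFun x := ⟨x ^ p, hpz x⟩
  map_one' := by simp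
  map_mul' x y := by
    obtain ⟨m, hm⟩ := hodd
    have hchoose : p.choose 2 = p * m := by
      rw [Nat.choose_two_right, hm, Nat.add_sub_cancel, mul_left_comm,
        Nat.mul_div_cancel_left _ two_pos]
    ext
    simp only [Subgroup.coe_mul, mul_pow_of_forall_mem_center hcz, hchoose, pow_mul,
      commutatorElement_pow_eq_one_of_pow_mem_center hcz hpz, one_pow, mul_one]

@[simp]
theorem coe_powCenterHom {p : ℕ} (hodd : Odd p) (hpz : ∀ g : G, g ^ p ∈ center G) (x : G) :
    (powCenterHom hcz hodd hpz x : G) = x ^ p := rfl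

end CentralCommutators

section CentralTranslation

variable (θ : G →* center G)

def centralTranslation : G →* G where
  toFun x := x * θ x
  map_one' := by simp
  map_mul' a b := by
    rw [map_mul, Subgroup.coe_mul, mul_assoc a b, ← mul_assoc b, mem_center_iff.mp (θ a).2 b]
    simp only [mul_assoc]

variable {θ}

@[simp]
theorem centralTranslation_apply (x : G) : centralTranslation θ x = x * θ x := rfl

theorem centralTranslation_injective {t : ℕ} (hθθ : ∀ x, θ (θ x) = θ x ^ t)
    (ht : ∀ y : center G, y ^ (1 + t) = 1 → y = 1) :
    Function.Injective (centralTranslation θ) := by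
  refine (injective_iff_map_eq_one _).mpr fun x hx ↦ ?_
  have hθx : θ x = 1 := ht _ <| by simpa [pow_add, hθθ] using congrArg θ hx
  simpa [hθx] using hx

theorem exists_mulAut_apply_eq_mul [Finite G] (hθ : Function.Injective (centralTranslation θ)) :
    ∃ σ : MulAut G, ∀ x, σ x = x * θ x :=
  ⟨MulEquiv.ofBijective _ (Finite.injective_iff_bijective.mp hθ), fun _ ↦ rfl⟩

theorem mulAut_pow_apply_of_apply_eq_mul {σ : MulAut G} (hσ : ∀ x, σ x = x * θ x) {t : ℕ}
    (hθθ : ∀ x, θ (θ x) = θ x ^ t) (m : ℕ) (x : G) :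
    (σ ^ m) x = x * ↑(θ x ^ ∑ i ∈ Finset.range m, (1 + t) ^ i) := by
  induction m with
  | zero => simp
  | succ m ih =>
    rw [pow_succ', MulAut.mul_apply, ih, hσ, map_mul, mul_assoc, ← Subgroup.coe_mul,
      SubmonoidClass.coe_pow, map_pow, hθθ, ← pow_mul, ← pow_succ', ← pow_add, geom_sum_succ]
    ring_nf

theorem apply_apply_comm_of_commute {σ τ : MulAut G} {η : G →* center G}
    (hσ : ∀ x, σ x = x * θ x) (hτ : ∀ x, τ x = x * η x) (h : σ * τ = τ * σ) (x : G) :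
    θ (η x) = η (θ x) := by
  have hx := DFunLike.congr_fun h x
  simp only [MulAut.mul_apply, hσ, hτ, map_mul, mul_assoc] at hx
  have h' := mul_left_cancel hx
  rw [← Subgroup.coe_mul, ← Subgroup.coe_mul] at h'
  exact mul_left_cancel (mul_left_cancel ((mul_left_comm _ _ _).trans (Subtype.coe_injective h')))

theorem centralHom_apply_pow_eq_one_of_not_dvd [Finite G] {p : ℕ} [Fact p.Prime] (hodd : Odd p)
    (hG : IsPGroup p G) (hel : ∀ φ : MulAut G, φ ^ p = 1) {t : ℕ}
    (hθθ : ∀ x, θ (θ x) = θ x ^ t) (ht : ¬ p ∣ 1 + t) (x : G) : θ x ^ p = 1 := by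
  have hp : p.Prime := Fact.out
  have hZ : IsPGroup p (center G) := hG.to_subgroup _
  obtain ⟨σ, hσ⟩ := exists_mulAut_apply_eq_mul <| centralTranslation_injective hθθ fun _ ↦
    hZ.eq_one_of_pow_eq_one (hp.coprime_iff_not_dvd.mpr ht)
  have hfix := mulAut_pow_apply_of_apply_eq_mul hσ hθθ p x
  rw [hel σ, MulAut.one_apply, left_eq_mul, OneMemClass.coe_eq_one] at hfix
  simpa using
    hZ.pow_prime_pow_eq_one_of_pow_eq_one (k := 1) hfix (Nat.not_sq_dvd_geom_sum hp hodd ht)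

theorem centralHom_apply_pow_eq_one [Finite G] {p : ℕ} [Fact p.Prime] (hodd : Odd p)
    (hG : IsPGroup p G) (hel : ∀ φ : MulAut G, φ ^ p = 1) {t : ℕ} (hθθ : ∀ x, θ (θ x) = θ x ^ t)
    (x : G) : θ x ^ p = 1 := by
  have hp : p.Prime := Fact.out
  by_cases ht : p ∣ 1 + t
  swap
  · exact centralHom_apply_pow_eq_one_of_not_dvd hodd hG hel hθθ ht x
  -- replacing `θ` by `θ ^ 2` replaces `1 + t` by `1 + 2 t`, which `p` does not divide
  have ht₂ : ¬ p ∣ 1 + 2 * t := fun h ↦ hp.not_dvd_one <|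
    (Nat.dvd_add_right h).mp (by rw [show 1 + 2 * t + 1 = 2 * (1 + t) by ring]; exact ht.mul_left 2)
  have hθθ₂ : ∀ x, (powMonoidHom 2).comp θ ((powMonoidHom 2).comp θ x) =
      (powMonoidHom 2).comp θ x ^ (2 * t) := fun x ↦ by
    simp only [MonoidHom.comp_apply, powMonoidHom_apply, SubmonoidClass.coe_pow, map_pow, hθθ]
    rw [← pow_mul, mul_comm]
  have h2 := centralHom_apply_pow_eq_one_of_not_dvd hodd hG hel hθθ₂ ht₂ x
  rw [MonoidHom.comp_apply, powMonoidHom_apply, ← pow_mul, mul_comm, pow_mul] at h2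
  exact (hG.to_subgroup _).eq_one_of_pow_eq_one (Nat.coprime_two_right.mpr hodd) h2

theorem zmodPowHom_comp_apply_apply {n : ℕ} [NeZero n] {z : center G} (hz : z ^ n = 1)
    (ν : G →* Multiplicative (ZMod n)) (x : G) :
    (zmodPowHom z hz).comp ν ((zmodPowHom z hz).comp ν x) =
      (zmodPowHom z hz).comp ν x ^ (ν z).toAdd.val := by
  simp only [MonoidHom.comp_apply]
  rw [zmodPowHom_apply hz (ν x), SubmonoidClass.coe_pow, map_pow, map_pow, zmodPowHom_apply,
    ← pow_mul, ← pow_mul, mul_comm]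

end CentralTranslation

theorem mem_center_of_conj_eq_one {g : G} (hg : MulAut.conj g = 1) : g ∈ center G :=
  mem_center_iff.mpr fun h ↦ by
    have := DFunLike.congr_fun hg h
    rw [MulAut.conj_apply, MulAut.one_apply, mul_inv_eq_iff_eq_mul] at this
    exact this.symm

theorem commutatorElement_mem_center_of_forall_commute
    (hab : ∀ φ ψ : MulAut G, φ * ψ = ψ * φ) (a b : G) : ⁅a, b⁆ ∈ center G :=
  mem_center_of_conj_eq_one <| by
    rw [map_commutatorElement, commutatorElement_eq_one_iff_mul_comm, hab]

theorem pow_mem_center_of_forall_pow_eq_one {n : ℕ} (hel : ∀ φ : MulAut G, φ ^ n = 1) (g : G) :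
    g ^ n ∈ center G :=
  mem_center_of_conj_eq_one <| by rw [map_pow, hel]

theorem subsingleton_of_forall_mul_comm {p : ℕ} (hodd : Odd p) (hG : IsPGroup p G)
    (hel : ∀ φ : MulAut G, φ ^ p = 1) (hcomm : ∀ a b : G, a * b = b * a) : Subsingleton G := by
  have : IsMulCommutative G := ⟨⟨hcomm⟩⟩
  have hinv : MulEquiv.inv G = 1 := by
    obtain ⟨m, hm⟩ := hodd
    have hsq : MulEquiv.inv G ^ 2 = 1 := by ext; simp [pow_two]
    rw [← hel (MulEquiv.inv G), hm, pow_succ, pow_mul, hsq, one_pow, one_mul]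
  have hx (g : G) : g = 1 := hG.eq_one_of_pow_eq_one (Nat.coprime_two_right.mpr hodd) <| by
    simpa [pow_two, mul_eq_one_iff_eq_inv] using (DFunLike.congr_fun hinv g).symm
  exact ⟨fun x y ↦ by rw [hx x, hx y]⟩

section ElementaryAbelianAut

variable [Finite G] {p : ℕ} [Fact p.Prime]

theorem pow_prime_sq_eq_one (hodd : Odd p) (hG : IsPGroup p G)
    (hab : ∀ φ ψ : MulAut G, φ * ψ = ψ * φ) (hel : ∀ φ : MulAut G, φ ^ p = 1) (x : G) :
    x ^ p ^ 2 = 1 := by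
  have hcz := commutatorElement_mem_center_of_forall_commute hab
  have h := centralHom_apply_pow_eq_one hodd hG hel (θ := powCenterHom hcz hodd
    (pow_mem_center_of_forall_pow_eq_one hel)) (t := p) (fun x ↦ Subtype.ext (by simp)) x
  simpa [← pow_mul, ← pow_two] using congrArg Subtype.val h

theorem frattini_le_center_inf_ker (hodd : Odd p) (hG : IsPGroup p G)
    (hab : ∀ φ ψ : MulAut G, φ * ψ = ψ * φ) (hel : ∀ φ : MulAut G, φ ^ p = 1) :
    frattini G ≤ center G ⊓ (powCenterHom (commutatorElement_mem_center_of_forall_commute hab)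
      hodd (pow_mem_center_of_forall_pow_eq_one hel)).ker := by
  have hcz := commutatorElement_mem_center_of_forall_commute hab
  have hpz := pow_mem_center_of_forall_pow_eq_one hel
  refine le_inf (frattini_le_of_commutator_le (p := p) (commutator_le.mpr fun a _ b _ ↦ hcz a b)
    hpz) (frattini_le_of_commutator_le (p := p) (commutator_le.mpr fun a _ b _ ↦ ?_) fun g ↦ ?_)
  · exact Subtype.ext (commutatorElement_pow_eq_one_of_pow_mem_center hcz hpz a b)
  · exact Subtype.ext (by simpa [← pow_mul, ← pow_two] using pow_prime_sq_eq_one hodd hG hab hel g)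

theorem pow_eq_one_of_mem_center_of_commutator_ne_frattini (hodd : Odd p) (hG : IsPGroup p G)
    (hel : ∀ φ : MulAut G, φ ^ p = 1) (hexp : ∀ x : G, x ^ p ^ 2 = 1)
    (hce : commutator G ≠ frattini G) {z : G} (hz : z ∈ center G) : z ^ p = 1 := by
  by_contra hzp
  obtain ⟨g, hg⟩ : ∃ g : G, g ^ p ∉ commutator G := by
    by_contra! h
    exact hce (hG.commutator_le_frattini.antisymm (frattini_le_of_commutator_le le_rfl h))
  have : NeZero (p ^ 2) := ⟨pow_ne_zero 2 (Fact.out : p.Prime).ne_zero⟩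
  obtain ⟨ν, -, hν⟩ := exists_zmod_hom_le_ker_apply_ne_one (n := p ^ 2) le_rfl
    (fun g ↦ by rw [hexp]; exact one_mem _) hg
  have hz₂ : (⟨z, hz⟩ : center G) ^ p ^ 2 = 1 := Subtype.ext (hexp z)
  have hord : orderOf (⟨z, hz⟩ : center G) = p ^ 2 :=
    orderOf_eq_prime_pow (n := 1) (fun h ↦ hzp (by simpa using congrArg Subtype.val h)) hz₂
  -- the automorphism `x ↦ x * z ^ ν x` would have order `p ^ 2`
  have h := centralHom_apply_pow_eq_one hodd hG hel (zmodPowHom_comp_apply_apply hz₂ ν) g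
  rw [MonoidHom.comp_apply, ← map_pow, zmodPowHom_eq_one_iff hz₂ hord, ← map_pow] at h
  exact hν h

theorem mul_comm_of_mem_center_of_apply_ne_one (hab : ∀ φ ψ : MulAut G, φ * ψ = ψ * φ) {z : G}
    (hz : z ∈ center G) (hzp : z ^ p = 1) {φ ψ : G →* Multiplicative (ZMod p)}
    (hφz : φ z ≠ 1) (hψz : ψ z = 1) {w : G} (hψw : ψ w ≠ 1) {a b : G} (hcp : ⁅a, b⁆ ^ p = 1) :
    a * b = b * a := by
  by_contra hne
  have hc : (⟨⁅a, b⁆, commutatorElement_mem_center_of_forall_commute hab a b⟩ : center G) ^ p = 1 :=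
    Subtype.ext hcp
  have hord := orderOf_eq_prime hc fun h ↦
    hne (commutatorElement_eq_one_iff_mul_comm.mp (congrArg Subtype.val h))
  have hz' : (⟨z, hz⟩ : center G) ^ p = 1 := Subtype.ext hzp
  have hker (χ : G →* Multiplicative (ZMod p)) : χ ⁅a, b⁆ = 1 := by
    rw [map_commutatorElement, commutatorElement_eq_one_iff_mul_comm, mul_comm]
  have hθθ := zmodPowHom_comp_apply_apply hc φ
  have hηη := zmodPowHom_comp_apply_apply hz' ψ
  simp only [hker, hψz, toAdd_one, ZMod.val_zero] at hθθ hηη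
  obtain ⟨σ, hσ⟩ := exists_mulAut_apply_eq_mul (centralTranslation_injective hθθ (by simp))
  obtain ⟨τ, hτ⟩ := exists_mulAut_apply_eq_mul (centralTranslation_injective hηη (by simp))
  -- `σ x = x * ⁅a, b⁆ ^ φ x` and `τ x = x * z ^ ψ x` commute, so `⁅a, b⁆ ^ (φ z * ψ w) = 1`
  have h := apply_apply_comm_of_commute hσ hτ (hab σ τ) w
  simp only [MonoidHom.comp_apply, zmodPowHom_apply, SubmonoidClass.coe_pow, map_pow, hker,
    one_pow, toAdd_one, ZMod.val_zero, pow_zero] at h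
  rw [← zmodPowHom_apply hc, ← map_pow, zmodPowHom_eq_one_iff hc hord, ← toAdd_eq_zero, toAdd_pow,
    nsmul_eq_mul, ZMod.natCast_zmod_val, mul_eq_zero, toAdd_eq_zero, toAdd_eq_zero] at h
  exact h.elim hψw hφz

theorem center_le_frattini_of_commutator_ne_frattini (hodd : Odd p) (hG : IsPGroup p G)
    (hab : ∀ φ ψ : MulAut G, φ * ψ = ψ * φ) (hel : ∀ φ : MulAut G, φ ^ p = 1)
    (hce : commutator G ≠ frattini G) : center G ≤ frattini G := by
  intro z hz
  by_contra hzΦ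
  have hzp := pow_eq_one_of_mem_center_of_commutator_ne_frattini hodd hG hel
    (pow_prime_sq_eq_one hodd hG hab hel) hce hz
  obtain ⟨a, b, hab'⟩ : ∃ a b : G, a * b ≠ b * a := by
    by_contra! h
    have := subsingleton_of_forall_mul_comm hodd hG hel h
    exact hzΦ (Subsingleton.elim z 1 ▸ one_mem _)
  obtain ⟨φ, -, hφz⟩ := exists_zmod_hom_le_ker_apply_ne_one (n := p) hG.commutator_le_frattini
    hG.pow_mem_frattini hzΦ
  have : (zpowers z).Normal :=
    ⟨fun n hn g ↦ by rwa [mem_center_iff.mp (zpowers_le.mpr hz hn) g, mul_inv_cancel_right]⟩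
  obtain ⟨w, hw⟩ : ∃ w, w ∉ frattini G ⊔ zpowers z := by
    by_contra! h
    have htop := frattini_nongenerating (K := zpowers z)
      (by rw [sup_comm]; exact (eq_top_iff' _).mpr h)
    obtain ⟨i, rfl⟩ := mem_zpowers_iff.mp (htop ▸ mem_top a : a ∈ zpowers z)
    obtain ⟨j, rfl⟩ := mem_zpowers_iff.mp (htop ▸ mem_top b : b ∈ zpowers z)
    exact hab' ((Commute.refl z).zpow_zpow i j)
  obtain ⟨ψ, hψ, hψw⟩ := exists_zmod_hom_le_ker_apply_ne_one (n := p)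
    (hG.commutator_le_frattini.trans le_sup_left) (fun g ↦ mem_sup_left (hG.pow_mem_frattini g))
    hw
  exact hab' (mul_comm_of_mem_center_of_apply_ne_one hab hz hzp hφz
    (hψ (mem_sup_right (mem_zpowers z))) hψw
    (commutatorElement_pow_eq_one_of_pow_mem_center
      (commutatorElement_mem_center_of_forall_commute hab)
      (pow_mem_center_of_forall_pow_eq_one hel) a b))

end ElementaryAbelianAut

end

/-- Jain–Rai–Yadav: if `G` is a finite `p`-group, `p` odd, with `Aut(G)` elementary
abelian, then `Φ(G)` is elementary abelian and `Z(G) = Φ(G)` or `[G,G] = Φ(G)`. -/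
theorem frattini_elementary_abelian_of_elementary_abelian_aut
    (p : ℕ) (hp : p.Prime) (hodd : Odd p)
    (G : Type*) [Group G] [Finite G] (hpG : IsPGroup p G)
    (hab : ∀ φ ψ : MulAut G, φ * ψ = ψ * φ)
    (hel : ∀ φ : MulAut G, φ ^ p = 1) :
    (∀ x ∈ frattini G, ∀ y ∈ frattini G, x * y = y * x) ∧
    (∀ x ∈ frattini G, x ^ p = 1) ∧
    (Subgroup.center G = frattini G ∨ commutator G = frattini G) := by
  have := Fact.mk hp
  have hΦ := frattini_le_center_inf_ker hodd hpG hab hel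
  refine ⟨fun x hx y _ ↦ (mem_center_iff.mp (hΦ hx).1 y).symm,
    fun x hx ↦ by simpa using congrArg Subtype.val (hΦ hx).2, ?_⟩
  by_cases hce : commutator G = frattini G
  · exact Or.inr hce
  · exact Or.inl ((center_le_frattini_of_commutator_ne_frattini hodd hpG hab hel hce).antisymm
      (hΦ.trans inf_le_left))
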